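/- arXiv:2109.10564 — 3 statements merged into one kernel-verified Lean document; each statement's English description precedes it below -/
import Mathlib

section
/- For every k ∈ ℕ and every t ∈ ℝ, the partial sum σ_k(t) = ∑_{j=1}^k sin(jt)/j is bounded by a constant C independent of k and t. -/
/-!
Split the sum at `N = ⌊1 / |sin (t / 2)|⌋`. Each of the first `N` terms is at most
`2 |sin (t / 2)|` in absolute value, since `|sin (j t)| ≤ 2 j |sin (t / 2)|`, so the head is at
most `2`. The partial sums `∑ sin (j t)` are bounded by `1 / |sin (t / 2)|`, so Abel summation
against the decreasing weights `1 / j` bounds the tail by `2 / ((N + 1) |sin (t / 2)|) < 2`.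
-/

open Finset Real

theorem Finset.sum_Icc_one_eq_sum_Icc_min_add_sum_Ioc {M : Type*} [AddCommMonoid M]
    (f : ℕ → M) (N k : ℕ) :
    ∑ j ∈ Icc 1 k, f j = ∑ j ∈ Icc 1 (min N k), f j + ∑ j ∈ Ioc N k, f j := by
  rcases le_total N k with h | h
  · have hIcc (n : ℕ) : Icc 1 n = Ioc 0 n := Icc_add_one_left_eq_Ioc 0 n
    rw [min_eq_left h, hIcc, hIcc, sum_Ioc_consecutive _ N.zero_le h]
  · rw [min_eq_right h, Ioc_eq_empty_of_le h, sum_empty, add_zero]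

/-- **Abel's inequality**. -/
theorem Finset.norm_sum_Ioc_smul_le {E : Type*} [NormedAddCommGroup E] [NormedSpace ℝ E]
    {f : ℕ → ℝ} {g : ℕ → E} {B : ℝ} {N : ℕ} (hf : AntitoneOn f (Set.Ioi N))
    (hf0 : ∀ i, N < i → 0 ≤ f i) (hg : ∀ n, ‖∑ i ∈ range n, g i‖ ≤ B) (k : ℕ) :
    ‖∑ i ∈ Ioc N k, f i • g i‖ ≤ 2 * B * f (N + 1) := by
  have hB : 0 ≤ B := (norm_nonneg _).trans (hg 0)
  have hfN : 0 ≤ f (N + 1) := hf0 _ N.lt_succ_self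
  rcases le_or_gt k N with hkN | hNk
  · rw [Ioc_eq_empty_of_le hkN, sum_empty, norm_zero]
    positivity
  set G := fun n ↦ ∑ i ∈ range n, g i
  have hfk : f k ≤ f (N + 1) := hf (Set.mem_Ioi.2 N.lt_succ_self) (Set.mem_Ioi.2 hNk) hNk
  have hdiff :
      ∑ i ∈ Ioc N (k - 1), ‖(f (i + 1) - f i) • G (i + 1)‖ ≤ (f (N + 1) - f k) * B := by
    calc ∑ i ∈ Ioc N (k - 1), ‖(f (i + 1) - f i) • G (i + 1)‖
        ≤ ∑ i ∈ Ioc N (k - 1), (f i - f (i + 1)) * B := by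
          refine sum_le_sum fun i hi ↦ ?_
          have hNi : N < i := (mem_Ioc.1 hi).1
          have hmono : f (i + 1) ≤ f i := hf hNi (hNi.trans i.lt_succ_self) i.le_succ
          rw [norm_smul, Real.norm_eq_abs, abs_of_nonpos (by linarith), neg_sub]
          exact mul_le_mul_of_nonneg_left (hg _) (by linarith)
      _ = (f (N + 1) - f k) * B := by
          have hIoc : Ioc N (k - 1) = Ico (N + 1) k := by
            ext; simp only [mem_Ioc, mem_Ico]; omega
          rw [← sum_mul, hIoc, ← neg_sub, ← sum_Ico_sub f hNk, ← sum_neg_distrib]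
          simp_rw [neg_sub]
  rw [sum_Ioc_by_parts f g hNk]
  calc _ ≤ ‖f k • G (k + 1)‖ + ‖f (N + 1) • G (N + 1)‖
        + ∑ i ∈ Ioc N (k - 1), ‖(f (i + 1) - f i) • G (i + 1)‖ :=
        (norm_sub_le _ _).trans (add_le_add (norm_sub_le _ _) (norm_sum_le _ _))
    _ ≤ f k * B + f (N + 1) * B + (f (N + 1) - f k) * B := by
        rw [norm_smul, norm_smul, Real.norm_eq_abs, Real.norm_eq_abs,
          abs_of_nonneg (hf0 k hNk), abs_of_nonneg hfN]
        gcongr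
        exacts [hf0 k hNk, hg _, hg _]
    _ = 2 * B * f (N + 1) := by ring

namespace Real

theorem abs_sin_nat_mul_le (n : ℕ) (x : ℝ) : |sin (n * x)| ≤ n * |sin x| := by
  induction n with
  | zero => simp
  | succ n ih =>
    calc |sin ((n + 1 : ℕ) * x)| = |sin (n * x) * cos x + cos (n * x) * sin x| := by
          push_cast; rw [add_mul, one_mul, sin_add]
      _ ≤ |sin (n * x)| * |cos x| + |cos (n * x)| * |sin x| := by
          rw [← abs_mul, ← abs_mul]; exact abs_add_le _ _
      _ ≤ n * |sin x| * 1 + 1 * |sin x| := by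
          gcongr <;> exact abs_cos_le_one _
      _ = (n + 1 : ℕ) * |sin x| := by push_cast; ring

theorem abs_sin_half_mul_abs_sum_range_sin_le (t : ℝ) (n : ℕ) :
    |sin (t / 2)| * |∑ i ∈ range n, sin (i * t)| ≤ 1 := by
  have h := sin_mul_sum_sin n t 0
  simp only [add_zero, mul_comm t] at h
  rw [← abs_mul, h, abs_mul]
  exact mul_le_one₀ (abs_sin_le_one _) (abs_nonneg _) (abs_sin_le_one _)

theorem abs_sum_Icc_sin_div_le (t : ℝ) (m : ℕ) :
    |∑ j ∈ Icc 1 m, sin (j * t) / j| ≤ 2 * m * |sin (t / 2)| := by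
  have hterm : ∀ j ∈ Icc 1 m, |sin (j * t) / j| ≤ 2 * |sin (t / 2)| := by
    intro j hj
    have hj : (0 : ℝ) < j := by exact_mod_cast (mem_Icc.1 hj).1
    rw [abs_div, abs_of_pos hj, div_le_iff₀ hj]
    calc |sin (j * t)| = |sin ((2 * j : ℕ) * (t / 2))| := by push_cast; ring_nf
      _ ≤ (2 * j : ℕ) * |sin (t / 2)| := abs_sin_nat_mul_le _ _
      _ = 2 * |sin (t / 2)| * j := by push_cast; ring
  calc |∑ j ∈ Icc 1 m, sin (j * t) / j| ≤ ∑ j ∈ Icc 1 m, |sin (j * t) / j| :=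
        abs_sum_le_sum_abs _ _
    _ ≤ ∑ j ∈ Icc 1 m, 2 * |sin (t / 2)| := sum_le_sum hterm
    _ = 2 * m * |sin (t / 2)| := by
          rw [sum_const, Nat.card_Icc, add_tsub_cancel_right, nsmul_eq_mul]; ring

theorem abs_sin_half_mul_abs_sum_Ioc_sin_div_le (t : ℝ) (N k : ℕ) :
    |sin (t / 2)| * |∑ j ∈ Ioc N k, sin (j * t) / j| ≤ 2 / (N + 1) := by
  have hf : AntitoneOn (fun i : ℕ ↦ (i : ℝ)⁻¹) (Set.Ioi N) := fun i hi j _ hij ↦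
    inv_anti₀ (by exact_mod_cast (Nat.zero_le N).trans_lt hi) (by exact_mod_cast hij)
  have hg (n : ℕ) : ‖∑ i ∈ range n, |sin (t / 2)| * sin (i * t)‖ ≤ 1 := by
    rw [← mul_sum, norm_mul, Real.norm_eq_abs, Real.norm_eq_abs, abs_abs]
    exact abs_sin_half_mul_abs_sum_range_sin_le t n
  have hsum : ∑ i ∈ Ioc N k, (i : ℝ)⁻¹ • (|sin (t / 2)| * sin (i * t))
      = |sin (t / 2)| * ∑ j ∈ Ioc N k, sin (j * t) / j := by
    rw [mul_sum]
    exact sum_congr rfl fun i _ ↦ by rw [smul_eq_mul]; ring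
  calc |sin (t / 2)| * |∑ j ∈ Ioc N k, sin (j * t) / j|
      = ‖∑ i ∈ Ioc N k, (i : ℝ)⁻¹ • (|sin (t / 2)| * sin (i * t))‖ := by
        rw [hsum, Real.norm_eq_abs, abs_mul, abs_abs]
    _ ≤ 2 * 1 * ((N + 1 : ℕ) : ℝ)⁻¹ :=
        norm_sum_Ioc_smul_le hf (fun i _ ↦ by positivity) hg k
    _ = 2 / (N + 1) := by push_cast; ring

end Real

/-- The partial sums `σ_k(t) = ∑_{j=1}^k sin(jt)/j` are uniformly bounded in `k` and `t`. -/
theorem uniform_bound_sigma :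
    ∃ C : ℝ, 0 < C ∧ ∀ (k : ℕ) (t : ℝ),
      |∑ j ∈ Finset.Icc 1 k, Real.sin (j * t) / j| ≤ C := by
  refine ⟨4, by norm_num, fun k t ↦ ?_⟩
  rcases (abs_nonneg (sin (t / 2))).eq_or_lt with hs | hs
  · calc _ ≤ 2 * k * |sin (t / 2)| := abs_sum_Icc_sin_div_le t k
      _ ≤ 4 := by rw [← hs]; norm_num
  set N := ⌊|sin (t / 2)|⁻¹⌋₊
  have hhead : 2 * (min N k : ℕ) * |sin (t / 2)| ≤ 2 := by
    have hmin : ((min N k : ℕ) : ℝ) ≤ |sin (t / 2)|⁻¹ :=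
      (Nat.cast_le.2 (min_le_left N k)).trans (Nat.floor_le (inv_nonneg.2 hs.le))
    calc 2 * (min N k : ℕ) * |sin (t / 2)| ≤ 2 * |sin (t / 2)|⁻¹ * |sin (t / 2)| := by gcongr
      _ = 2 := by field_simp
  have htail : |∑ j ∈ Ioc N k, sin (j * t) / j| ≤ 2 := by
    have hN : 1 ≤ (N + 1) * |sin (t / 2)| :=
      (inv_le_iff_one_le_mul₀ hs).1 (Nat.lt_floor_add_one _).le
    calc |∑ j ∈ Ioc N k, sin (j * t) / j|
        ≤ (N + 1) * (|sin (t / 2)| * |∑ j ∈ Ioc N k, sin (j * t) / j|) := by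
          rw [← mul_assoc]; exact le_mul_of_one_le_left (abs_nonneg _) hN
      _ ≤ (N + 1) * (2 / (N + 1)) := by
          gcongr; exact abs_sin_half_mul_abs_sum_Ioc_sin_div_le t N k
      _ = 2 := by field_simp
  rw [sum_Icc_one_eq_sum_Icc_min_add_sum_Ioc _ N k]
  calc _ ≤ |∑ j ∈ Icc 1 (min N k), sin (j * t) / j| + |∑ j ∈ Ioc N k, sin (j * t) / j| :=
        abs_add_le _ _
    _ ≤ 2 + 2 := add_le_add ((abs_sum_Icc_sin_div_le t _).trans hhead) htail
    _ = 4 := by norm_num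
end

section
/- If z ∈ ℂ satisfies dist(z, 2ℕ₀ + d) ≥ c for a constant 0 < c < 1, then for every integer m ≥ 2 the sum ∑_{k=0}^∞ |2k + d − z|^{−m} is bounded by C_m (1 + |Im z|)^{1−m}, with C_m depending only on m, d, c. -/
/-!
Put `b = 1 + |Im z|` and let `n` be the integer nearest to `(Re z - d) / 2`. Since
`|2k + d - z|` dominates `c`, `|Im z|` and `|2k + d - Re z| = 2 |k - (Re z - d) / 2| ≥ |k - n|`,
we get `|2k + d - z| ≥ (c / 3) (b + |k - n|)`. Hence the sum is at most `(3 / c)^m` times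
`∑_{j ∈ ℤ} (b + |j|)^{-m} ≤ 2 ∑_{j ≥ 0} (b + j)^{-m} ≤ 4 b^{1-m}`, the last step from
`(b + j)^{-m} ≤ b^{2-m} (b + j)^{-2}` and a telescoping bound `∑_{j ≥ 0} (b + j)^{-2} ≤ 2 / b`.
-/

open Finset

section InverseShiftedPowers

variable {b : ℝ} {m : ℕ}

/-- Since `b + j ≥ 1`, `(b + j)⁻² ≤ 2 ((b + j)⁻¹ - (b + j + 1)⁻¹)`, which telescopes. -/
lemma sum_range_inv_add_sq_le (hb : 1 ≤ b) (N : ℕ) :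
    ∑ j ∈ range N, (b + j)⁻¹ ^ 2 ≤ 2 * b⁻¹ := by
  have hterm : ∀ j : ℕ, (b + j)⁻¹ ^ 2 ≤ 2 * ((b + j)⁻¹ - (b + (j + 1 : ℕ))⁻¹) := by
    intro j
    have hj : (1 : ℝ) ≤ b + j := by linarith [(Nat.cast_nonneg j : (0 : ℝ) ≤ j)]
    have hx : (0 : ℝ) < b + j := by linarith
    push_cast
    rw [← add_assoc, inv_sub_inv hx.ne' (by positivity), add_sub_cancel_left, inv_pow,
      ← one_div, mul_div_assoc', div_le_div_iff₀ (by positivity) (by positivity)]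
    nlinarith
  calc ∑ j ∈ range N, (b + j)⁻¹ ^ 2
      ≤ ∑ j ∈ range N, 2 * ((b + j)⁻¹ - (b + (j + 1 : ℕ))⁻¹) :=
        sum_le_sum fun j _ => hterm j
    _ = 2 * (b⁻¹ - (b + N)⁻¹) := by
      rw [← mul_sum, sum_range_sub' (fun j : ℕ => (b + j)⁻¹), Nat.cast_zero, add_zero]
    _ ≤ 2 * b⁻¹ := by
      have : 0 ≤ (b + N)⁻¹ := by positivity
      linarith

lemma sum_range_inv_add_pow_le (hb : 1 ≤ b) (hm : 2 ≤ m) (N : ℕ) :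
    ∑ j ∈ range N, (b + j)⁻¹ ^ m ≤ 2 * b⁻¹ ^ (m - 1) := by
  have hb0 : 0 < b := by linarith
  have hterm : ∀ j : ℕ, (b + j)⁻¹ ^ m ≤ b⁻¹ ^ (m - 2) * (b + j)⁻¹ ^ 2 := by
    intro j
    rw [← Nat.sub_add_cancel hm, pow_add, Nat.add_sub_cancel]
    gcongr
    exact le_add_of_nonneg_right (Nat.cast_nonneg j)
  calc ∑ j ∈ range N, (b + j)⁻¹ ^ m
      ≤ b⁻¹ ^ (m - 2) * ∑ j ∈ range N, (b + j)⁻¹ ^ 2 := by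
        rw [mul_sum]; exact sum_le_sum fun j _ => hterm j
    _ ≤ b⁻¹ ^ (m - 2) * (2 * b⁻¹) := by gcongr; exact sum_range_inv_add_sq_le hb N
    _ = 2 * b⁻¹ ^ (m - 1) := by
      rw [show m - 1 = m - 2 + 1 by omega, pow_succ]; ring

lemma summable_inv_add_pow (hb : 1 ≤ b) (hm : 2 ≤ m) :
    Summable fun j : ℕ => (b + j)⁻¹ ^ m :=
  summable_of_sum_range_le (fun j => by positivity) (sum_range_inv_add_pow_le hb hm)

lemma tsum_inv_add_pow_le (hb : 1 ≤ b) (hm : 2 ≤ m) :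
    ∑' j : ℕ, (b + j)⁻¹ ^ m ≤ 2 * b⁻¹ ^ (m - 1) :=
  Real.tsum_le_of_sum_range_le (fun j => by positivity) (sum_range_inv_add_pow_le hb hm)

end InverseShiftedPowers

lemma HasSum.int_natAbs {G : Type*} [AddCommGroup G] [TopologicalSpace G]
    [IsTopologicalAddGroup G] {g : ℕ → G} {a : G} (h : HasSum g a) :
    HasSum (fun i : ℤ => g i.natAbs) (a + a - g 0) :=
  HasSum.of_nat_of_neg (by simpa using h) (by simpa using h)

section NonnegSeries

variable {g : ℕ → ℝ}

lemma Summable.natAbs_sub (hs : Summable g) (n : ℤ) :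
    Summable fun k : ℕ => g ((k : ℤ) - n).natAbs :=
  (((Equiv.subRight n).summable_iff (f := fun i : ℤ => g i.natAbs)).mpr
    hs.hasSum.int_natAbs.summable).comp_injective Nat.cast_injective

lemma tsum_natAbs_sub_le (hg : ∀ j, 0 ≤ g j) (hs : Summable g) (n : ℤ) :
    ∑' k : ℕ, g ((k : ℤ) - n).natAbs ≤ 2 * ∑' j, g j :=
  calc ∑' k : ℕ, g ((k : ℤ) - n).natAbs
      ≤ ∑' i : ℤ, g (i - n).natAbs :=
        tsum_comp_le_tsum_of_inj
          ((Equiv.subRight n).summable_iff.mpr hs.hasSum.int_natAbs.summable)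
          (fun _ => hg _) Nat.cast_injective
    _ = ∑' i : ℤ, g i.natAbs := (Equiv.subRight n).tsum_eq fun i : ℤ => g i.natAbs
    _ = 2 * ∑' j, g j - g 0 := by rw [hs.hasSum.int_natAbs.tsum_eq, two_mul]
    _ ≤ 2 * ∑' j, g j := sub_le_self _ (hg 0)

end NonnegSeries

lemma abs_sub_round_le_two_mul_abs_sub {α : Type*} [Field α] [LinearOrder α]
    [IsStrictOrderedRing α] [FloorRing α] (k : ℤ) (t : α) : |(k : α) - round t| ≤ 2 * |k - t| := by
  rcases eq_or_ne k (round t) with hk | hk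
  · simp [hk]
  have hone : (1 : α) ≤ |(k : α) - round t| := by
    rw [← Int.cast_sub, ← Int.cast_abs, ← Int.cast_one, Int.cast_le]
    exact Int.one_le_abs (sub_ne_zero.mpr hk)
  have := abs_sub_round t
  have := abs_sub_le (k : α) t (round t)
  linarith

lemma Complex.mul_one_add_abs_re_add_abs_im_le {w : ℂ} {c : ℝ} (hc1 : c ≤ 1)
    (hw : c ≤ ‖w‖) :
    c * (1 + |w.re| + |w.im|) ≤ 3 * ‖w‖ := by
  have hre := Complex.abs_re_le_norm w
  have him := Complex.abs_im_le_norm w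
  nlinarith [abs_nonneg w.re, abs_nonneg w.im]

lemma mul_add_natAbs_sub_round_le_norm {c d : ℝ} {z : ℂ} {k : ℤ} (hc : 0 ≤ c) (hc1 : c ≤ 1)
    (hz : c ≤ ‖z - (2 * k + d)‖) :
    c * (1 + |z.im| + ((k - round ((z.re - d) / 2)).natAbs : ℝ))
      ≤ 3 * ‖(2 * k + d : ℂ) - z‖ := by
  set w : ℂ := (2 * k + d : ℂ) - z
  have hre : |w.re| = 2 * |(k : ℝ) - (z.re - d) / 2| := by
    rw [← abs_two, ← abs_mul]; congr 1; simp [w]; ring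
  have him : |w.im| = |z.im| := by simp [w]
  have hround : ((k - round ((z.re - d) / 2)).natAbs : ℝ) ≤ |w.re| := by
    rw [Nat.cast_natAbs, Int.cast_abs, Int.cast_sub, hre]
    exact abs_sub_round_le_two_mul_abs_sub k _
  have key := Complex.mul_one_add_abs_re_add_abs_im_le hc1 (w := w) (by rwa [norm_sub_rev])
  rw [him] at key
  nlinarith [mul_le_mul_of_nonneg_left hround hc]

lemma inv_norm_sub_pow_le {c d : ℝ} {z : ℂ} {k : ℤ} (hc : 0 < c) (hc1 : c ≤ 1)
    (hz : c ≤ ‖z - (2 * k + d)‖) (m : ℕ) :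
    ‖(2 * k + d : ℂ) - z‖⁻¹ ^ m
      ≤ (3 / c) ^ m * (1 + |z.im| + ((k - round ((z.re - d) / 2)).natAbs : ℝ))⁻¹ ^ m := by
  set x : ℝ := 1 + |z.im| + ((k - round ((z.re - d) / 2)).natAbs : ℝ)
  have hlow : c / 3 * x ≤ ‖(2 * k + d : ℂ) - z‖ := by
    linarith [mul_add_natAbs_sub_round_le_norm hc.le hc1 hz]
  have hinv : ‖(2 * k + d : ℂ) - z‖⁻¹ ≤ 3 / c * x⁻¹ :=
    calc ‖(2 * k + d : ℂ) - z‖⁻¹ ≤ (c / 3 * x)⁻¹ := inv_anti₀ (by positivity) hlow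
      _ = 3 / c * x⁻¹ := by rw [mul_inv, inv_div]
  rw [← mul_pow]
  exact pow_le_pow_left₀ (by positivity) hinv m

theorem resolvent_sum_bound_general (d : ℕ) (c : ℝ) (hc : 0 < c) (hc1 : c < 1)
    (m : ℕ) (hm : 2 ≤ m) :
    ∃ C : ℝ, 0 < C ∧ ∀ z : ℂ,
      (∀ k : ℕ, c ≤ ‖z - (2 * k + d)‖) →
      ∑' k : ℕ, ‖(2 * k + d : ℂ) - z‖⁻¹ ^ m
        ≤ C * (1 + |z.im|) ^ ((1 : ℤ) - m) := by
  refine ⟨4 * (3 / c) ^ m, by positivity, fun z hz => ?_⟩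
  set b : ℝ := 1 + |z.im|
  have hb : 1 ≤ b := le_add_of_nonneg_right (abs_nonneg _)
  set n : ℤ := round ((z.re - d) / 2)
  have hpoint (k : ℕ) :
      ‖(2 * k + d : ℂ) - z‖⁻¹ ^ m ≤ (3 / c) ^ m * (b + ((k : ℤ) - n).natAbs)⁻¹ ^ m := by
    simpa using inv_norm_sub_pow_le (k := k) (d := d) hc hc1.le (by simpa using hz k) m
  have hs := summable_inv_add_pow hb hm
  calc ∑' k : ℕ, ‖(2 * k + d : ℂ) - z‖⁻¹ ^ m
      ≤ ∑' k : ℕ, (3 / c) ^ m * (b + ((k : ℤ) - n).natAbs)⁻¹ ^ m :=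
        Summable.tsum_le_tsum hpoint
          (.of_nonneg_of_le (fun _ => by positivity) hpoint ((hs.natAbs_sub n).mul_left _))
          ((hs.natAbs_sub n).mul_left _)
    _ = (3 / c) ^ m * ∑' k : ℕ, (b + ((k : ℤ) - n).natAbs)⁻¹ ^ m := tsum_mul_left
    _ ≤ (3 / c) ^ m * (2 * (2 * b⁻¹ ^ (m - 1))) := by
        gcongr
        exact (tsum_natAbs_sub_le (fun j => by positivity) hs n).trans
          (by gcongr; exact tsum_inv_add_pow_le hb hm)
    _ = 4 * (3 / c) ^ m * (1 + |z.im|) ^ ((1 : ℤ) - m) := by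
        rw [show (1 : ℤ) - m = -((m - 1 : ℕ) : ℤ) by omega, zpow_neg, zpow_natCast, inv_pow]
        ring

/-- If `dist(z, 2ℕ₀ + d) ≥ c` with `0 < c < 1`, then for every `m ≥ 2`,
`∑_{k=0}^∞ |2k + d − z|^{−m} ≤ C_m (1 + |Im z|)^{1−m}` with `C_m` depending only on
`m`, `d` and `c`. -/
theorem resolvent_sum_bound (d : ℕ) (hd : 1 ≤ d) (c : ℝ) (hc : 0 < c) (hc1 : c < 1)
    (m : ℕ) (hm : 2 ≤ m) :
    ∃ C : ℝ, 0 < C ∧ ∀ z : ℂ,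
      (∀ k : ℕ, c ≤ ‖z - (2 * k + d)‖) →
      ∑' k : ℕ, ‖(2 * k + d : ℂ) - z‖⁻¹ ^ m
        ≤ C * (1 + |z.im|) ^ ((1 : ℤ) - m) :=
  resolvent_sum_bound_general d c hc hc1 m hm
end

section
/- Let μ ∈ (−1/2, 1/2) and τ ∈ ℝ with μ² + τ² ≥ c² for some c > 0. Define G(t) = 1/(iτ + t + μ). Then there is B > 0 depending only on c such that: |G(n)| ≤ B for all n ∈ ℤ; ∑_{k=1}^∞ |G(k) + G(−k)| ≤ B; and ∑_{k=1}^∞ |k G(k) − (k+1) G(k+1)| ≤ B. -/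
/-!
With `z = μ + iτ` we have `G t = (t + z)⁻¹` and `|Re z| < 1/2`, so `x² + τ² ≤ 4‖x + z‖²` whenever
`|x| ≥ 1`. Both series have terms of the form `z / ((x + z)(y + z))` with `1 ≤ |x| ≤ |y|`:
`G k + G (-k) = 2z / ((k + z)(-k + z))` and `k G k - (k + 1) G (k + 1) = -z / ((k + z)(k + 1 + z))`.
Since `‖z‖ ≤ 1/2 + |τ|`, such a term is at most `2 / k² + 4 |τ| / (k² + τ²)`. The first part sums to
at most `2`; the second to at most `π / 2` uniformly in `τ`, because `|τ| / (k² + τ²)` is dominated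
by the increment of `arctan (k / |τ|)`, which telescopes.
-/

open Finset Real

lemma summable_and_tsum_le_of_le_of_sum_range_le {f g : ℕ → ℝ} {C : ℝ} (hf : ∀ k, 0 ≤ f k)
    (hfg : ∀ k, f k ≤ g k) (hg : ∀ n, ∑ k ∈ range n, g k ≤ C) :
    Summable f ∧ ∑' k, f k ≤ C := by
  have hf_sum (n : ℕ) : ∑ k ∈ range n, f k ≤ C := (sum_le_sum fun k _ => hfg k).trans (hg n)
  exact ⟨summable_of_sum_range_le hf hf_sum, Real.tsum_le_of_sum_range_le hf hf_sum⟩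

lemma sum_range_one_div_succ_sq_le_two (n : ℕ) :
    ∑ k ∈ range n, 1 / ((k : ℝ) + 1) ^ 2 ≤ 2 := by
  have h := sum_Ioo_inv_sq_le (α := ℝ) 0 (n + 1)
  rw [show Ioo 0 (n + 1) = Ico 1 (n + 1) from rfl, sum_Ico_eq_sum_range] at h
  simpa [add_comm] using h

lemma sub_div_one_add_sq_le_arctan_sub {a b : ℝ} (ha : 0 ≤ a) (hab : a ≤ b) :
    (b - a) / (1 + b ^ 2) ≤ arctan b - arctan a := by
  have hderiv : ∀ x ∈ interior (Set.Icc 0 b), 1 / (1 + b ^ 2) ≤ deriv arctan x := by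
    rw [interior_Icc]
    rintro x ⟨hx0, hxb⟩
    rw [Real.deriv_arctan]
    dsimp only
    gcongr
  have := (convex_Icc 0 b).mul_sub_le_image_sub_of_le_deriv continuous_arctan.continuousOn
    differentiable_arctan.differentiableOn hderiv a ⟨ha, hab⟩ b ⟨ha.trans hab, le_rfl⟩ hab
  rwa [one_div_mul_eq_div] at this

lemma abs_div_succ_sq_add_sq_le_arctan_sub (t : ℝ) (k : ℕ) :
    |t| / (((k : ℝ) + 1) ^ 2 + t ^ 2) ≤ arctan ((k + 1) / |t|) - arctan (k / |t|) := by
  rcases eq_or_ne t 0 with rfl | ht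
  · simp
  have ht' : 0 < |t| := abs_pos.mpr ht
  convert sub_div_one_add_sq_le_arctan_sub (a := k / |t|) (b := (k + 1) / |t|) (by positivity)
    (by gcongr; linarith) using 1
  rw [← sq_abs t]
  field_simp
  ring

lemma sum_range_abs_div_succ_sq_add_sq_le (t : ℝ) (n : ℕ) :
    ∑ k ∈ range n, |t| / (((k : ℝ) + 1) ^ 2 + t ^ 2) ≤ π / 2 :=
  calc ∑ k ∈ range n, |t| / (((k : ℝ) + 1) ^ 2 + t ^ 2)
      ≤ ∑ k ∈ range n, (arctan (((k + 1 : ℕ) : ℝ) / |t|) - arctan ((k : ℕ) / |t|)) :=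
        sum_le_sum fun k _ => by push_cast; exact abs_div_succ_sq_add_sq_le_arctan_sub t k
    _ = arctan (n / |t|) := by rw [sum_range_sub (fun k : ℕ => arctan (k / |t|))]; simp
    _ ≤ π / 2 := (arctan_lt_pi_div_two _).le

noncomputable def tailBound (t x : ℝ) : ℝ :=
  2 / x ^ 2 + 4 * (|t| / (x ^ 2 + t ^ 2))

lemma sum_range_tailBound_le (t : ℝ) (n : ℕ) :
    ∑ k ∈ range n, tailBound t (k + 1) ≤ 4 + 2 * π := by
  have h₁ := sum_range_one_div_succ_sq_le_two n
  have h₂ := sum_range_abs_div_succ_sq_add_sq_le t n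
  calc ∑ k ∈ range n, tailBound t (k + 1)
      = 2 * ∑ k ∈ range n, 1 / ((k : ℝ) + 1) ^ 2
        + 4 * ∑ k ∈ range n, |t| / (((k : ℝ) + 1) ^ 2 + t ^ 2) := by
        simp only [tailBound, sum_add_distrib, mul_sum, mul_one_div]
    _ ≤ 4 + 2 * π := by linarith

section

variable {z : ℂ}

lemma sq_add_im_sq_le_four_mul_norm_add_sq (hz : |z.re| ≤ 1 / 2) {x : ℝ} (hx : 1 ≤ |x|) :
    x ^ 2 + z.im ^ 2 ≤ 4 * ‖(x : ℂ) + z‖ ^ 2 := by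
  have hre : |x| / 2 ≤ |x + z.re| := by
    have := abs_sub_abs_le_abs_add x z.re
    linarith [abs_add_le x z.re]
  rw [Complex.sq_norm, Complex.normSq_apply]
  simp only [Complex.add_re, Complex.ofReal_re, Complex.add_im, Complex.ofReal_im, zero_add]
  nlinarith [sq_abs x, sq_abs (x + z.re), abs_nonneg x, sq_nonneg z.im]

lemma norm_div_mul_le (hz : |z.re| ≤ 1 / 2) {x y : ℝ} (hx : 1 ≤ |x|) (hxy : |x| ≤ |y|) :
    ‖z / (((x : ℂ) + z) * ((y : ℂ) + z))‖ ≤ tailBound z.im x := by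
  have hq : 0 < x ^ 2 + z.im ^ 2 := by
    have : 0 < x ^ 2 := by nlinarith [sq_abs x]
    positivity
  have hx' := sq_add_im_sq_le_four_mul_norm_add_sq hz hx
  have hy' := sq_add_im_sq_le_four_mul_norm_add_sq hz (hx.trans hxy)
  have hxy2 : x ^ 2 ≤ y ^ 2 := sq_le_sq.mpr hxy
  have hden : (x ^ 2 + z.im ^ 2) / 4 ≤ ‖(x : ℂ) + z‖ * ‖(y : ℂ) + z‖ := by
    nlinarith [norm_nonneg ((x : ℂ) + z), norm_nonneg ((y : ℂ) + z),
      mul_nonneg (norm_nonneg ((x : ℂ) + z)) (norm_nonneg ((y : ℂ) + z))]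
  have hnum : ‖z‖ ≤ 1 / 2 + |z.im| := (Complex.norm_le_abs_re_add_abs_im z).trans (by linarith)
  calc ‖z / (((x : ℂ) + z) * ((y : ℂ) + z))‖
      = ‖z‖ / (‖(x : ℂ) + z‖ * ‖(y : ℂ) + z‖) := by rw [norm_div, norm_mul]
    _ ≤ (1 / 2 + |z.im|) / ((x ^ 2 + z.im ^ 2) / 4) := by gcongr
    _ = 2 / (x ^ 2 + z.im ^ 2) + 4 * (|z.im| / (x ^ 2 + z.im ^ 2)) := by
      field_simp
      ring
    _ ≤ tailBound z.im x := by
      unfold tailBound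
      gcongr
      · nlinarith [sq_abs x]
      · nlinarith [sq_nonneg z.im]

lemma half_le_norm_ofReal_add (hz : |z.re| ≤ 1 / 2) {x : ℝ} (hx : 1 ≤ |x|) :
    1 / 2 ≤ ‖(x : ℂ) + z‖ := by
  nlinarith [sq_add_im_sq_le_four_mul_norm_add_sq hz hx, sq_abs x, sq_nonneg z.im,
    norm_nonneg ((x : ℂ) + z)]

lemma ofReal_add_ne_zero (hz : |z.re| ≤ 1 / 2) {x : ℝ} (hx : 1 ≤ |x|) : (x : ℂ) + z ≠ 0 :=
  norm_pos_iff.mp ((half_le_norm_ofReal_add hz hx).trans_lt' one_half_pos)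

lemma norm_inv_intCast_add_le (hz : |z.re| ≤ 1 / 2) (n : ℤ) :
    ‖(((n : ℝ) : ℂ) + z)⁻¹‖ ≤ max ‖z‖⁻¹ 2 := by
  rcases eq_or_ne n 0 with rfl | hn
  · simp
  · have hn' : 1 ≤ |(n : ℝ)| := by exact_mod_cast Int.one_le_abs hn
    calc ‖(((n : ℝ) : ℂ) + z)⁻¹‖ ≤ (1 / 2)⁻¹ := by
          rw [norm_inv]
          exact inv_anti₀ one_half_pos (half_le_norm_ofReal_add hz hn')
      _ = 2 := by norm_num
      _ ≤ max ‖z‖⁻¹ 2 := le_max_right _ _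

lemma norm_inv_add_inv_neg_le (hz : |z.re| ≤ 1 / 2) {x : ℝ} (hx : 1 ≤ |x|) :
    ‖((x : ℂ) + z)⁻¹ + (((-x : ℝ) : ℂ) + z)⁻¹‖
      ≤ 2 * tailBound z.im x := by
  have hx' : 1 ≤ |-x| := by rwa [abs_neg]
  have h := ofReal_add_ne_zero hz hx
  have h' := ofReal_add_ne_zero hz hx'
  have key : ((x : ℂ) + z)⁻¹ + (((-x : ℝ) : ℂ) + z)⁻¹
      = 2 * (z / (((x : ℂ) + z) * (((-x : ℝ) : ℂ) + z))) := by
    field_simp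
    push_cast
    ring
  rw [key, norm_mul, Complex.norm_two]
  gcongr
  exact norm_div_mul_le hz hx (abs_neg x).ge

lemma norm_mul_inv_sub_mul_inv_le (hz : |z.re| ≤ 1 / 2) {x : ℝ} (hx : 1 ≤ x) :
    ‖(x : ℂ) * ((x : ℂ) + z)⁻¹ - ((x : ℂ) + 1) * ((x : ℂ) + 1 + z)⁻¹‖
      ≤ tailBound z.im x := by
  have hx1 : 1 ≤ |x| := hx.trans (le_abs_self x)
  have hxx : |x| ≤ |x + 1| := by rw [abs_of_nonneg, abs_of_nonneg] <;> linarith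
  have h := ofReal_add_ne_zero hz hx1
  have h' := ofReal_add_ne_zero hz (hx1.trans hxx)
  have key : (x : ℂ) * ((x : ℂ) + z)⁻¹ - ((x : ℂ) + 1) * ((x : ℂ) + 1 + z)⁻¹
      = -(z / (((x : ℂ) + z) * (((x + 1 : ℝ) : ℂ) + z))) := by
    push_cast at h' ⊢
    field_simp
    ring
  rw [key, norm_neg]
  exact norm_div_mul_le hz hx1 hxx

end

/-- For `G(t) = 1/(iτ + t + μ)` with `μ ∈ (−1/2, 1/2)`, `τ ∈ ℝ` and `μ² + τ² ≥ c²`,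
there is `B > 0` depending only on `c` such that `|G(n)| ≤ B` for all `n ∈ ℤ`,
`∑_{k≥1} |G(k) + G(−k)| ≤ B`, and `∑_{k≥1} |k G(k) − (k+1) G(k+1)| ≤ B`. -/
theorem G_mu_tau_bounds (c : ℝ) (hc : 0 < c) :
    ∃ B : ℝ, 0 < B ∧ ∀ (μ τ : ℝ), -(1/2) < μ → μ < 1/2 → c ^ 2 ≤ μ ^ 2 + τ ^ 2 →
      ∀ G : ℝ → ℂ, (∀ t : ℝ, G t = (Complex.I * τ + t + μ)⁻¹) →
      ((∀ n : ℤ, ‖G n‖ ≤ B) ∧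
       (Summable (fun k : ℕ => ‖G (k + 1) + G (-(k + 1 : ℕ) : ℤ)‖) ∧
         ∑' k : ℕ, ‖G (k + 1) + G (-(k + 1 : ℕ) : ℤ)‖ ≤ B) ∧
       (Summable (fun k : ℕ => ‖((k : ℂ) + 1) * G (k + 1) - ((k : ℂ) + 2) * G (k + 2)‖) ∧
         ∑' k : ℕ, ‖((k : ℂ) + 1) * G (k + 1) - ((k : ℂ) + 2) * G (k + 2)‖ ≤ B)) := by
  refine ⟨c⁻¹ + 8 + 4 * π, by positivity, fun μ τ hμ₁ hμ₂ hc_le G hG => ?_⟩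
  set z : ℂ := ⟨μ, τ⟩
  have hz : |z.re| ≤ 1 / 2 := abs_le.mpr ⟨hμ₁.le, hμ₂.le⟩
  have hG' (t : ℝ) : G t = ((t : ℂ) + z)⁻¹ := by
    rw [hG]; congr 1; apply Complex.ext <;> simp [z]
  have hzc : ‖z‖⁻¹ ≤ c⁻¹ := by
    refine inv_anti₀ hc (abs_le_of_sq_le_sq' ?_ (norm_nonneg z)).2
    rwa [Complex.sq_norm, Complex.normSq_mk, ← sq, ← sq]
  have hsym (k : ℕ) : ‖G (k + 1) + G (-(k + 1 : ℕ) : ℤ)‖ ≤ 2 * tailBound τ (k + 1) := by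
    have hcast : ((-(k + 1 : ℕ) : ℤ) : ℝ) = -((k : ℝ) + 1) := by push_cast; ring
    rw [hG', hG', hcast]
    exact norm_inv_add_inv_neg_le hz ((le_add_of_nonneg_left k.cast_nonneg).trans (le_abs_self _))
  have hdiff (k : ℕ) :
      ‖((k : ℂ) + 1) * G (k + 1) - ((k : ℂ) + 2) * G (k + 2)‖ ≤ tailBound τ (k + 1) := by
    have := norm_mul_inv_sub_mul_inv_le hz (x := k + 1) (by simp)
    rw [hG', hG']
    push_cast at this ⊢
    rwa [add_assoc (k : ℂ) 1 1, one_add_one_eq_two] at this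
  refine ⟨fun n => ?_, summable_and_tsum_le_of_le_of_sum_range_le (fun _ => norm_nonneg _) hsym
    fun n => ?_, summable_and_tsum_le_of_le_of_sum_range_le (fun _ => norm_nonneg _) hdiff
    fun n => ?_⟩
  · rw [hG']
    refine (norm_inv_intCast_add_le hz n).trans (max_le ?_ ?_) <;>
      linarith [pi_pos, inv_pos.mpr hc]
  · rw [← mul_sum]; linarith [sum_range_tailBound_le τ n, inv_pos.mpr hc]
  · linarith [sum_range_tailBound_le τ n, inv_pos.mpr hc, pi_pos]
end
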